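/- arXiv:2312.14801 — 5 statements merged into one kernel-verified Lean document; each statement's English description precedes it below -/
import Mathlib

section
/- Let Z and Y be real Hilbert spaces, B : Z → Y a Fredholm bounded linear operator, and Q : Z → Z a bounded self-adjoint linear operator such that ⟪Qz, z⟫ ≥ α‖z‖² for all z ∈ ker B, for some α > 0. Then the bounded linear operator A : Z × Y → Z × Y defined by A(z, y) = (Qz + B†y, Bz) is Fredholm, i.e. its kernel is finite-dimensional and its range is closed with finite codimension. -/
/-!
Write `K = ker B` and `R = range B`. If `A (z, y) = 0` then `B z = 0`, and pairing the first
component with `z` kills `B† y`, so coercivity forces `z = 0`: the kernel of `A` is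
`0 × ker B† = 0 × Rᗮ`, finite-dimensional because `R` is closed of finite codimension.
Given `(f, B z₀)`, Lax–Milgram on `K` yields `k ∈ K` with `f - Q (z₀ + k) ⊥ K`; as `R` is
closed, `B` has a bounded left inverse on `Kᗮ`, whence `Kᗮ ≤ range B†` and
`f - Q (z₀ + k) = B† y`. So `range A` contains `Z × R`, which is closed of finite codimension,
and therefore so is `range A`.
-/

open ContinuousLinearMap Submodule
open scoped RealInnerProductSpace

theorem Submodule.CoFG.prod {R M N : Type*} [Ring R] [AddCommGroup M] [Module R M]
    [AddCommGroup N] [Module R N] {p : Submodule R M} {q : Submodule R N}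
    (hp : p.CoFG) (hq : q.CoFG) : (p.prod q).CoFG := by
  rw [← ker_mkQ p, ← ker_mkQ q, ← LinearMap.ker_prodMap, ← Submodule.range_fg_iff_ker_cofg,
    LinearMap.range_prodMap, range_mkQ, range_mkQ, prod_top]
  exact Module.Finite.fg_top

theorem Submodule.finiteDimensional_orthogonal_of_coFG {𝕜 E : Type*} [RCLike 𝕜]
    [NormedAddCommGroup E] [InnerProductSpace 𝕜 E] (K : Submodule 𝕜 E)
    [K.HasOrthogonalProjection] [hK : K.CoFG] : FiniteDimensional 𝕜 Kᗮ :=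
  .of_fg (hK.fg_of_isCompl K.isCompl_orthogonal)

namespace ContinuousLinearMap

variable {Z Y : Type*} [NormedAddCommGroup Z] [InnerProductSpace ℝ Z] [CompleteSpace Z]
    [NormedAddCommGroup Y] [InnerProductSpace ℝ Y] [CompleteSpace Y]

theorem exists_comp_eq_starProjection_orthogonal_ker (B : Z →L[ℝ] Y)
    (hB : IsClosed (B.range : Set Y)) :
    ∃ S : Y →L[ℝ] Z, S ∘L B = B.kerᗮ.starProjection := by
  set K := B.ker
  have : CompleteSpace K := B.isClosed_ker.completeSpace_coe
  set C := B ∘L Kᗮ.subtypeL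
  have hC : ∀ z, C (Kᗮ.orthogonalProjectionOnto z) = B z := by
    intro z
    have hK : B (K.starProjection z) = 0 := (K.orthogonalProjectionOnto z).2
    conv_rhs => rw [← K.starProjection_add_starProjection_orthogonal z]
    rw [map_add, hK, zero_add]
    rfl
  have hC_inj : Function.Injective C :=
    (injective_iff_map_eq_zero C).mpr fun x hx ↦ Subtype.ext (inner_self_eq_zero.mp (x.2 x hx))
  have hC_range : Set.range C = B.range := by
    refine subset_antisymm ?_ ?_
    · rintro _ ⟨x, rfl⟩; exact ⟨x, rfl⟩
    · rintro _ ⟨z, rfl⟩; exact ⟨_, hC z⟩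
  have hC_closed : IsClosed (Set.range C) := hC_range ▸ hB
  have : CompleteSpace C.range :=
    (show IsClosed (C.range : Set Y) from hC_closed).completeSpace_coe
  let e := C.equivRange hC_inj hC_closed
  refine ⟨Kᗮ.subtypeL ∘L e.symm ∘L C.range.orthogonalProjectionOnto, ?_⟩
  ext z
  have hx : ∀ x, C.range.orthogonalProjectionOnto (C x) = ⟨C x, LinearMap.mem_range_self _ x⟩ :=
    fun x ↦ orthogonalProjectionOnto_mem_subspace_eq_self (K := C.range) ⟨C x, _⟩
  rw [starProjection_apply, comp_apply, ← hC z]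
  simp only [comp_apply, ContinuousLinearEquiv.coe_coe, hx, e, equivRange_symm_apply]
  rfl

theorem orthogonal_ker_le_range_adjoint (B : Z →L[ℝ] Y) (hB : IsClosed (B.range : Set Y)) :
    B.kerᗮ ≤ (adjoint B).range := by
  obtain ⟨S, hS⟩ := B.exists_comp_eq_starProjection_orthogonal_ker hB
  have hSB : adjoint B ∘L adjoint S = B.kerᗮ.starProjection := by
    rw [← adjoint_comp, hS, (isSelfAdjoint_starProjection _).adjoint_eq]
  intro w hw
  refine ⟨adjoint S w, ?_⟩
  change (adjoint B ∘L adjoint S) w = w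
  rw [hSB, starProjection_eq_self_iff]
  exact hw

end ContinuousLinearMap

theorem Submodule.exists_mem_sub_apply_mem_orthogonal_of_coercive {E : Type*}
    [NormedAddCommGroup E] [InnerProductSpace ℝ E] (K : Submodule ℝ E) [CompleteSpace K]
    (Q : E →L[ℝ] E) {α : ℝ} (hα : 0 < α) (hQ : ∀ z ∈ K, α * ‖z‖ ^ 2 ≤ ⟪Q z, z⟫)
    (f : E) : ∃ k ∈ K, f - Q k ∈ Kᗮ := by
  set b : K →L[ℝ] K →L[ℝ] ℝ := (innerSL ℝ).bilinearComp (Q ∘L K.subtypeL) K.subtypeL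
  have hb : IsCoercive b := ⟨α, hα, fun u ↦ by simpa [b, sq, mul_assoc] using hQ u u.2⟩
  set k := hb.continuousLinearEquivOfBilin.symm (K.orthogonalProjectionOnto f)
  refine ⟨k, k.2, fun w hw ↦ ?_⟩
  have h : ⟪f, w⟫ = ⟪Q k, w⟫ := by
    simpa [k, b] using hb.continuousLinearEquivOfBilin_apply k ⟨w, hw⟩
  rw [inner_sub_right, real_inner_comm f, real_inner_comm (Q k), h, sub_self]

section SaddlePoint

variable {Z Y : Type*} [NormedAddCommGroup Z] [InnerProductSpace ℝ Z] [CompleteSpace Z]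
    [NormedAddCommGroup Y] [InnerProductSpace ℝ Y] [CompleteSpace Y]
    (B : Z →L[ℝ] Y) (Q : Z →L[ℝ] Z)

noncomputable def saddlePointOperator : Z × Y →L[ℝ] Z × Y :=
  (Q ∘L fst ℝ Z Y + adjoint B ∘L snd ℝ Z Y).prod (B ∘L fst ℝ Z Y)

@[simp]
theorem saddlePointOperator_apply (p : Z × Y) :
    saddlePointOperator B Q p = (Q p.1 + adjoint B p.2, B p.1) :=
  rfl

variable {B Q} {α : ℝ}

theorem ker_saddlePointOperator_le (hα : 0 < α) (hQ : ∀ z ∈ B.ker, α * ‖z‖ ^ 2 ≤ ⟪Q z, z⟫) :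
    (saddlePointOperator B Q).ker ≤ (adjoint B).ker.map (LinearMap.inr ℝ Z Y) := by
  rintro ⟨z, y⟩ h
  obtain ⟨h₁, h₂⟩ : Q z + adjoint B y = 0 ∧ B z = 0 := Prod.ext_iff.mp h
  have hQz : ⟪Q z, z⟫ = 0 := by
    simpa [inner_add_left, adjoint_inner_left, h₂] using congrArg (⟪·, z⟫) h₁
  have hz : z = 0 := by
    by_contra hz
    have := mul_pos hα (pow_pos (norm_pos_iff.mpr hz) 2)
    linarith [hQ z h₂]
  subst hz
  exact ⟨y, by simpa using h₁, rfl⟩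

theorem prod_top_range_le_range_saddlePointOperator (hB : IsClosed (B.range : Set Y))
    (hα : 0 < α) (hQ : ∀ z ∈ B.ker, α * ‖z‖ ^ 2 ≤ ⟪Q z, z⟫) :
    (⊤ : Submodule ℝ Z).prod B.range ≤ (saddlePointOperator B Q).range := by
  rintro ⟨f, _⟩ ⟨-, z₀, rfl⟩
  have : CompleteSpace B.ker := B.isClosed_ker.completeSpace_coe
  obtain ⟨k, hk, hfk⟩ := B.ker.exists_mem_sub_apply_mem_orthogonal_of_coercive Q hα hQ (f - Q z₀)
  obtain ⟨y, hy⟩ := orthogonal_ker_le_range_adjoint B hB hfk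
  have hBk : B k = 0 := hk
  have hy' : adjoint B y = f - Q z₀ - Q k := hy
  refine ⟨(z₀ + k, y), ?_⟩
  simp only [coe_coe, saddlePointOperator_apply, map_add, hy', hBk, add_zero]
  abel_nf

end SaddlePoint

theorem stmt1_general
    {Z Y : Type*} [NormedAddCommGroup Z] [InnerProductSpace ℝ Z] [CompleteSpace Z]
    [NormedAddCommGroup Y] [InnerProductSpace ℝ Y] [CompleteSpace Y]
    (B : Z →L[ℝ] Y)
    (hBrange : IsClosed (LinearMap.range (B : Z →ₗ[ℝ] Y) : Set Y))
    (hBcodim : FiniteDimensional ℝ (Y ⧸ LinearMap.range (B : Z →ₗ[ℝ] Y)))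
    (Q : Z →L[ℝ] Z)
    (α : ℝ) (hα : 0 < α)
    (hQcoer : ∀ z ∈ LinearMap.ker (B : Z →ₗ[ℝ] Y), α * ‖z‖ ^ 2 ≤ (inner ℝ (Q z) z : ℝ))
    (A : (Z × Y) →L[ℝ] (Z × Y))
    (hA : ∀ zy : Z × Y, A zy = (Q zy.1 + (ContinuousLinearMap.adjoint B) zy.2, B zy.1)) :
    FiniteDimensional ℝ (LinearMap.ker (A : (Z × Y) →ₗ[ℝ] (Z × Y))) ∧
      IsClosed (LinearMap.range (A : (Z × Y) →ₗ[ℝ] (Z × Y)) : Set (Z × Y)) ∧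
      FiniteDimensional ℝ ((Z × Y) ⧸ LinearMap.range (A : (Z × Y) →ₗ[ℝ] (Z × Y))) := by
  obtain rfl : A = saddlePointOperator B Q := ContinuousLinearMap.ext hA
  have : CompleteSpace B.range := hBrange.completeSpace_coe
  have : FiniteDimensional ℝ (adjoint B).ker := by
    rw [← orthogonal_range]
    exact B.range.finiteDimensional_orthogonal_of_coFG
  have hV_closed : IsClosed ((⊤ : Submodule ℝ Z).prod B.range : Set (Z × Y)) := by
    rw [prod_coe, top_coe]
    exact isClosed_univ.prod hBrange
  have hV_cofg : ((⊤ : Submodule ℝ Z).prod B.range).CoFG := CoFG.top.prod hBcodim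
  have hV_le := prod_top_range_le_range_saddlePointOperator hBrange hα hQcoer
  exact ⟨finiteDimensional_of_le (ker_saddlePointOperator_le hα hQcoer),
    isClosed_mono_of_finiteDimensional_quotient hV_closed hV_le, hV_cofg.of_le hV_le⟩

/-- Let `Z`, `Y` be real Hilbert spaces, `B : Z → Y` a Fredholm
bounded linear operator (finite-dimensional kernel, closed range of finite
codimension), `Q : Z → Z` bounded self-adjoint with `⟪Qz, z⟫ ≥ α‖z‖²` on `ker B`
for some `α > 0`.  Then the bounded linear operator `A(z, y) = (Qz + B†y, Bz)` on
`Z × Y` is Fredholm: its kernel is finite-dimensional and its range is closed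
with finite codimension. -/
theorem stmt1
    {Z Y : Type*} [NormedAddCommGroup Z] [InnerProductSpace ℝ Z] [CompleteSpace Z]
    [NormedAddCommGroup Y] [InnerProductSpace ℝ Y] [CompleteSpace Y]
    (B : Z →L[ℝ] Y)
    (hBker : FiniteDimensional ℝ (LinearMap.ker (B : Z →ₗ[ℝ] Y)))
    (hBrange : IsClosed (LinearMap.range (B : Z →ₗ[ℝ] Y) : Set Y))
    (hBcodim : FiniteDimensional ℝ (Y ⧸ LinearMap.range (B : Z →ₗ[ℝ] Y)))
    (Q : Z →L[ℝ] Z)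
    (hQsym : ∀ z₁ z₂ : Z, (inner ℝ (Q z₁) z₂ : ℝ) = inner ℝ (Q z₂) z₁)
    (α : ℝ) (hα : 0 < α)
    (hQcoer : ∀ z ∈ LinearMap.ker (B : Z →ₗ[ℝ] Y), α * ‖z‖ ^ 2 ≤ (inner ℝ (Q z) z : ℝ))
    (A : (Z × Y) →L[ℝ] (Z × Y))
    (hA : ∀ zy : Z × Y, A zy = (Q zy.1 + (ContinuousLinearMap.adjoint B) zy.2, B zy.1)) :
    FiniteDimensional ℝ (LinearMap.ker (A : (Z × Y) →ₗ[ℝ] (Z × Y))) ∧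
      IsClosed (LinearMap.range (A : (Z × Y) →ₗ[ℝ] (Z × Y)) : Set (Z × Y)) ∧
      FiniteDimensional ℝ ((Z × Y) ⧸ LinearMap.range (A : (Z × Y) →ₗ[ℝ] (Z × Y))) :=
  stmt1_general B hBrange hBcodim Q α hα hQcoer A hA
end

section
/- Let Z and Y be real Hilbert spaces, B : Z → Y a Fredholm bounded linear operator, and Q : Z → Z a bounded self-adjoint linear operator such that ⟪Qz, z⟫ ≥ α‖z‖² for all z ∈ ker B, for some α > 0. Then for every ε > 0 there exist δ > 0 and σ > 0 such that for all bounded linear operators B̃ : Z → Y with ‖B̃ − B‖ < δ, all bounded linear operators Q̃ : Z → Z with ‖Q̃ − Q‖ < δ, and all 0 < ρ ≤ σ, one has ⟪(Q̃ + ρ⁻¹ B̃† B̃) z, z⟫ ≥ (α − ε)‖z‖² for all z ∈ Z. -/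
/-!
Split `z = u + w` with `u ∈ ker B` and `w ⟂ ker B`. Since `B` has closed range, the open mapping
theorem gives `c ‖w‖ ≤ ‖B w‖`. If `‖w‖ ≤ η ‖z‖`, the coercivity of `Q` on `ker B` passes to `z`
and to `Q̃` up to an error `O(η + ‖Q̃ - Q‖)`; otherwise `‖B̃ z‖ ≥ (c η / 2) ‖z‖` for `B̃` close to
`B`, and for small `ρ` the penalty `ρ⁻¹ ‖B̃ z‖²` dominates everything else.
-/

theorem ContinuousLinearMap.exists_pos_mul_norm_sub_starProjection_ker_le
    {𝕜 E F : Type*} [RCLike 𝕜] [NormedAddCommGroup E] [InnerProductSpace 𝕜 E] [CompleteSpace E]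
    [NormedAddCommGroup F] [NormedSpace 𝕜 F] [CompleteSpace F]
    (B : E →L[𝕜] F) (hB : IsClosed (LinearMap.range (B : E →ₗ[𝕜] F) : Set F)) :
    ∃ c > (0 : ℝ), ∀ z, c * ‖z - (LinearMap.ker (B : E →ₗ[𝕜] F)).starProjection z‖ ≤ ‖B z‖ := by
  set K := LinearMap.ker (B : E →ₗ[𝕜] F)
  have : CompleteSpace (LinearMap.range (B : E →ₗ[𝕜] F)) := hB.completeSpace_coe
  obtain ⟨C, hC, hpre⟩ := B.rangeRestrict.exists_preimage_norm_le B.surjective_rangeRestrict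
  refine ⟨C⁻¹, inv_pos.2 hC, fun z => ?_⟩
  obtain ⟨x, hx, hxC⟩ := hpre (B.rangeRestrict z)
  -- `z` and its preimage `x` of controlled norm differ by an element of `ker B`
  have hzx : z - K.starProjection z = x - K.starProjection x := by
    have hmem : z - x ∈ K := by
      have hBx : B x = B z := congrArg Subtype.val hx
      simp [K, hBx]
    rw [sub_eq_sub_iff_sub_eq_sub, ← map_sub, K.starProjection_eq_self_iff.2 hmem]
  have hx_le : ‖x - K.starProjection x‖ ≤ ‖x‖ := by
    simpa using Kᗮ.norm_starProjection_apply_le x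
  rw [inv_mul_le_iff₀ hC, hzx]
  exact hx_le.trans hxC

namespace ContinuousLinearMap

variable {E : Type*} [NormedAddCommGroup E] [InnerProductSpace ℝ E]

theorem abs_real_inner_map_self_le (T : E →L[ℝ] E) (x : E) :
    |inner ℝ (T x) x| ≤ ‖T‖ * ‖x‖ ^ 2 :=
  calc |inner ℝ (T x) x| ≤ ‖T x‖ * ‖x‖ := abs_real_inner_le_norm _ _
    _ ≤ ‖T‖ * ‖x‖ * ‖x‖ := by gcongr; exact T.le_opNorm x
    _ = ‖T‖ * ‖x‖ ^ 2 := by ring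

theorem abs_real_inner_map_self_sub_le (T : E →L[ℝ] E) (x y : E) :
    |inner ℝ (T x) x - inner ℝ (T y) y| ≤ ‖T‖ * ‖x - y‖ * (‖x‖ + ‖y‖) := by
  have hsplit : inner ℝ (T x) x - inner ℝ (T y) y =
      inner ℝ (T (x - y)) x + inner ℝ (T y) (x - y) := by
    simp only [map_sub, inner_sub_left, inner_sub_right]
    ring
  rw [hsplit]
  calc |inner ℝ (T (x - y)) x + inner ℝ (T y) (x - y)|
      ≤ ‖T (x - y)‖ * ‖x‖ + ‖T y‖ * ‖x - y‖ :=
        (abs_add_le _ _).trans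
          (add_le_add (abs_real_inner_le_norm _ _) (abs_real_inner_le_norm _ _))
    _ ≤ ‖T‖ * ‖x - y‖ * ‖x‖ + ‖T‖ * ‖y‖ * ‖x - y‖ := by
        gcongr <;> exact T.le_opNorm _
    _ = ‖T‖ * ‖x - y‖ * (‖x‖ + ‖y‖) := by ring

theorem le_real_inner_map_self_of_coercive_on (K : Submodule ℝ E) [K.HasOrthogonalProjection]
    (Q : E →L[ℝ] E) {α : ℝ} (hα : 0 ≤ α) (hQ : ∀ u ∈ K, α * ‖u‖ ^ 2 ≤ inner ℝ (Q u) u)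
    (z : E) :
    α * ‖z‖ ^ 2 - (α + 2 * ‖Q‖) * ‖z‖ * ‖z - K.starProjection z‖ ≤ inner ℝ (Q z) z := by
  set u := K.starProjection z
  have hpyth : ‖z‖ ^ 2 = ‖u‖ ^ 2 + ‖z - u‖ ^ 2 := by
    simpa using K.norm_sq_eq_add_norm_sq_starProjection z
  have hu : ‖u‖ ≤ ‖z‖ := K.norm_starProjection_apply_le z
  have hw : ‖z - u‖ ≤ ‖z‖ := by simpa using Kᗮ.norm_starProjection_apply_le z
  have hcoer := hQ u (K.starProjection_apply_mem z)
  have hdiff := (abs_le.1 (Q.abs_real_inner_map_self_sub_le z u)).1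
  have : ‖Q‖ * ‖z - u‖ * (‖z‖ + ‖u‖) ≤ 2 * ‖Q‖ * ‖z‖ * ‖z - u‖ := by
    nlinarith [mul_nonneg (norm_nonneg Q) (norm_nonneg (z - u))]
  nlinarith [mul_le_mul_of_nonneg_left hw (mul_nonneg hα (norm_nonneg (z - u)))]

theorem le_real_inner_add_smul_adjoint_apply_self
    {Y : Type*} [NormedAddCommGroup Y] [InnerProductSpace ℝ Y] [CompleteSpace E] [CompleteSpace Y]
    {B : E →L[ℝ] Y} {c : ℝ} (hc : 0 ≤ c)
    (hcB : ∀ z, c * ‖z - (LinearMap.ker (B : E →ₗ[ℝ] Y)).starProjection z‖ ≤ ‖B z‖)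
    {Q : E →L[ℝ] E} {α : ℝ} (hα : 0 ≤ α)
    (hQ : ∀ u ∈ LinearMap.ker (B : E →ₗ[ℝ] Y), α * ‖u‖ ^ 2 ≤ inner ℝ (Q u) u)
    {η : ℝ} (B' : E →L[ℝ] Y) (hB' : ‖B' - B‖ ≤ c * η / 2) (Q' : E →L[ℝ] E) {ρ : ℝ} (hρ : 0 < ρ)
    (z : E) :
    (min (α - (α + 2 * ‖Q‖) * η) ((c * η / 2) ^ 2 / ρ - ‖Q‖) - ‖Q' - Q‖) * ‖z‖ ^ 2 ≤
      inner ℝ (Q' z + ρ⁻¹ • (adjoint B') (B' z)) z := by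
  set K := LinearMap.ker (B : E →ₗ[ℝ] Y)
  rw [inner_add_left, real_inner_smul_left, adjoint_inner_left, real_inner_self_eq_norm_sq]
  have hQ'z : inner ℝ (Q z) z - ‖Q' - Q‖ * ‖z‖ ^ 2 ≤ inner ℝ (Q' z) z := by
    have h := (abs_le.1 ((Q' - Q).abs_real_inner_map_self_le z)).1
    rw [sub_apply, inner_sub_left] at h
    linarith
  have hQz := Q.le_real_inner_map_self_of_coercive_on K hα hQ z
  have hBz := hcB z
  set a := ‖z‖
  set b := ‖z - K.starProjection z‖
  rcases le_or_gt b (η * a) with hnear | hfar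
  · have hpen : 0 ≤ ρ⁻¹ * ‖B' z‖ ^ 2 := by positivity
    have hab : (α + 2 * ‖Q‖) * a * b ≤ (α + 2 * ‖Q‖) * a * (η * a) := by gcongr
    have hmin := min_le_left (α - (α + 2 * ‖Q‖) * η) ((c * η / 2) ^ 2 / ρ - ‖Q‖)
    nlinarith [sq_nonneg a]
  · have hB'z : c * η / 2 * a ≤ ‖B' z‖ := by
      have hBB' : ‖B z‖ ≤ ‖B' z‖ + c * η / 2 * a :=
        calc ‖B z‖ = ‖B' z - (B' - B) z‖ := by rw [sub_apply, sub_sub_cancel]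
          _ ≤ ‖B' z‖ + ‖B' - B‖ * a :=
            (norm_sub_le _ _).trans (by gcongr; exact (B' - B).le_opNorm z)
          _ ≤ ‖B' z‖ + c * η / 2 * a := by gcongr
      have hcb : c * (η * a) ≤ c * b := by gcongr
      linarith
    have hpen : (c * η / 2) ^ 2 / ρ * a ^ 2 ≤ ρ⁻¹ * ‖B' z‖ ^ 2 :=
      calc (c * η / 2) ^ 2 / ρ * a ^ 2 = ρ⁻¹ * (c * η / 2 * a) ^ 2 := by ring
        _ ≤ ρ⁻¹ * ‖B' z‖ ^ 2 := by
          have hk : 0 ≤ c * η / 2 := (norm_nonneg _).trans hB'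
          gcongr
    have hQ := (abs_le.1 (Q.abs_real_inner_map_self_le z)).1
    have hmin := min_le_right (α - (α + 2 * ‖Q‖) * η) ((c * η / 2) ^ 2 / ρ - ‖Q‖)
    nlinarith [sq_nonneg a]

end ContinuousLinearMap

theorem stmt3_general
    {Z Y : Type*} [NormedAddCommGroup Z] [InnerProductSpace ℝ Z] [CompleteSpace Z]
    [NormedAddCommGroup Y] [InnerProductSpace ℝ Y] [CompleteSpace Y]
    (B : Z →L[ℝ] Y)
    (hBrange : IsClosed (LinearMap.range (B : Z →ₗ[ℝ] Y) : Set Y))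
    (Q : Z →L[ℝ] Z)
    (α : ℝ) (hα : 0 < α)
    (hQcoer : ∀ z ∈ LinearMap.ker (B : Z →ₗ[ℝ] Y), α * ‖z‖ ^ 2 ≤ (inner ℝ (Q z) z : ℝ)) :
    ∀ ε > (0 : ℝ), ∃ δ > (0 : ℝ), ∃ σ > (0 : ℝ),
      ∀ (B' : Z →L[ℝ] Y) (Q' : Z →L[ℝ] Z) (ρ : ℝ),
        ‖B' - B‖ < δ → ‖Q' - Q‖ < δ → 0 < ρ → ρ ≤ σ →
        ∀ z : Z, (α - ε) * ‖z‖ ^ 2 ≤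
          (inner ℝ (Q' z + ρ⁻¹ • (ContinuousLinearMap.adjoint B') (B' z)) z : ℝ) := by
  intro ε hε
  obtain ⟨c, hc, hcB⟩ := B.exists_pos_mul_norm_sub_starProjection_ker_le hBrange
  set η := ε / (2 * (α + 2 * ‖Q‖ + 1))
  have hηε : (α + 2 * ‖Q‖) * η ≤ ε / 2 := by
    have : (α + 2 * ‖Q‖ + 1) * η = ε / 2 := by
      simp only [η]
      field_simp
    nlinarith [show 0 < η by positivity]
  set k := c * η / 2
  refine ⟨min (ε / 2) k, by positivity, k ^ 2 / (α + ‖Q‖), by positivity,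
    fun B' Q' ρ hB' hQ' hρ hρσ z => ?_⟩
  have hpen : α + ‖Q‖ ≤ k ^ 2 / ρ := by
    rwa [le_div_iff₀ hρ, ← le_div_iff₀' (by positivity)]
  have hmin : α - ε / 2 ≤ min (α - (α + 2 * ‖Q‖) * η) (k ^ 2 / ρ - ‖Q‖) :=
    le_min (by linarith) (by linarith)
  have hQ'Q : ‖Q' - Q‖ ≤ ε / 2 := hQ'.le.trans (min_le_left _ _)
  calc (α - ε) * ‖z‖ ^ 2
      ≤ (min (α - (α + 2 * ‖Q‖) * η) (k ^ 2 / ρ - ‖Q‖) - ‖Q' - Q‖) * ‖z‖ ^ 2 := by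
        gcongr ?_ * _
        linarith
    _ ≤ _ := ContinuousLinearMap.le_real_inner_add_smul_adjoint_apply_self hc.le hcB hα.le
        hQcoer B' (hB'.le.trans (min_le_right _ _)) Q' hρ z

/-- perturbed coercivity, Lemma `Lem:CoerciveRetten`.
Let `Z`, `Y` be real Hilbert spaces, `B : Z → Y` Fredholm, `Q : Z → Z` bounded
self-adjoint with `⟪Qz, z⟫ ≥ α‖z‖²` on `ker B` for some `α > 0`.  Then for every
`ε > 0` there exist `δ > 0` and `σ > 0` such that for all `B̃` with `‖B̃ − B‖ < δ`,
all `Q̃` with `‖Q̃ − Q‖ < δ` and all `0 < ρ ≤ σ`,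
`⟪(Q̃ + ρ⁻¹ B̃† B̃) z, z⟫ ≥ (α − ε) ‖z‖²` for all `z ∈ Z`. -/
theorem stmt3
    {Z Y : Type*} [NormedAddCommGroup Z] [InnerProductSpace ℝ Z] [CompleteSpace Z]
    [NormedAddCommGroup Y] [InnerProductSpace ℝ Y] [CompleteSpace Y]
    (B : Z →L[ℝ] Y)
    (hBker : FiniteDimensional ℝ (LinearMap.ker (B : Z →ₗ[ℝ] Y)))
    (hBrange : IsClosed (LinearMap.range (B : Z →ₗ[ℝ] Y) : Set Y))
    (hBcodim : FiniteDimensional ℝ (Y ⧸ LinearMap.range (B : Z →ₗ[ℝ] Y)))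
    (Q : Z →L[ℝ] Z)
    (hQsym : ∀ z₁ z₂ : Z, (inner ℝ (Q z₁) z₂ : ℝ) = inner ℝ (Q z₂) z₁)
    (α : ℝ) (hα : 0 < α)
    (hQcoer : ∀ z ∈ LinearMap.ker (B : Z →ₗ[ℝ] Y), α * ‖z‖ ^ 2 ≤ (inner ℝ (Q z) z : ℝ)) :
    ∀ ε > (0 : ℝ), ∃ δ > (0 : ℝ), ∃ σ > (0 : ℝ),
      ∀ (B' : Z →L[ℝ] Y) (Q' : Z →L[ℝ] Z) (ρ : ℝ),
        ‖B' - B‖ < δ → ‖Q' - Q‖ < δ → 0 < ρ → ρ ≤ σ →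
        ∀ z : Z, (α - ε) * ‖z‖ ^ 2 ≤
          (inner ℝ (Q' z + ρ⁻¹ • (ContinuousLinearMap.adjoint B') (B' z)) z : ℝ) :=
  stmt3_general B hBrange Q α hα hQcoer
end

section
/- Let Z and Y be real Hilbert spaces, B : Z → Y a Fredholm bounded linear operator, and Q : Z → Z a bounded self-adjoint linear operator such that ⟪Qz, z⟫ ≥ α‖z‖² for all z ∈ ker B, for some α > 0. Then there exist κ > 0 and c₁ > 0 such that for every ρ ∈ (0, κ] and every (z, λ) ∈ Z × Y: ‖z‖ + ρ‖λ‖ ≤ c₁ (‖Qz + B†λ‖ + ‖Bz − ρλ‖). -/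
/-!
Split `z = u + v` along `ker B ⊕ (ker B)ᗮ` and `λ = λ₁ + λ₂` along `range B ⊕ (range B)ᗮ`.
Since the range of `B` is closed, `B` is bounded below on `(ker B)ᗮ` (open mapping theorem), and
by duality `B†` is bounded below on `range B`. Hence `v` is controlled by `Bz`, `u` by coercivity
of `Q` on `ker B` (where `B†λ` is invisible), `λ₁` by `B†λ = (Qz + B†λ) - Qz`, and `ρ λ₂` is the
projection of `ρλ - Bz` onto `(range B)ᗮ`. This gives two coupled estimates: `‖z‖` in terms of the
residuals and `ρ‖λ‖`, and `ρ‖λ‖` in terms of the residuals and `ρ‖z‖`. For `ρ` small the coupling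
is a contraction and both can be solved for.
-/

open RealInnerProductSpace
open scoped NNReal

lemma mul_norm_le_norm_of_mul_sq_le_inner {E : Type*} [NormedAddCommGroup E]
    [InnerProductSpace ℝ E] {α : ℝ} {u w : E} (h : α * ‖u‖ ^ 2 ≤ ⟪w, u⟫) : α * ‖u‖ ≤ ‖w‖ := by
  rcases (norm_nonneg u).eq_or_lt with hu | hu
  · simp [← hu]
  · exact le_of_mul_le_mul_right (by nlinarith [real_inner_le_norm w u]) hu

lemma exists_add_le_of_small_gain {a p q r s : ℝ} (ha : 0 < a) (hp : 0 < p) (hq : 0 ≤ q)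
    (hr : 0 ≤ r) (hs : 0 ≤ s) (hqs : 2 * q * s ≤ a) :
    ∃ c > 0, ∀ X Y T : ℝ, 0 ≤ X → 0 ≤ Y →
      a * X ≤ p * T + q * Y → Y ≤ r * T + s * X → X + Y ≤ c * T := by
  set d := 2 * (a * r + s * p) / a
  refine ⟨(p + q * d) / a + d, by positivity, fun X Y T hX hY hXY hYX => ?_⟩
  have hY' : Y ≤ d * T := by
    rw [div_mul_eq_mul_div, le_div_iff₀ ha]
    nlinarith [mul_le_mul_of_nonneg_left hXY hs]
  have hX' : X ≤ (p + q * d) / a * T := by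
    rw [div_mul_eq_mul_div, le_div_iff₀ ha]
    nlinarith [mul_le_mul_of_nonneg_left hY' hq]
  linarith

namespace ContinuousLinearMap

variable {E F : Type*} [NormedAddCommGroup E] [InnerProductSpace ℝ E] [CompleteSpace E]
  [NormedAddCommGroup F] [InnerProductSpace ℝ F] (B : E →L[ℝ] F)

lemma apply_starProjection_orthogonal_ker (z : E) : B (B.kerᗮ.starProjection z) = B z := by
  have h : B (B.ker.starProjection z) = 0 := B.ker.starProjection_apply_mem z
  rw [Submodule.starProjection_orthogonal_val, map_sub, h, sub_zero]

variable [CompleteSpace F]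

lemma exists_norm_starProjection_orthogonal_ker_le (hB : IsClosed (B.range : Set F)) :
    ∃ C : ℝ≥0, ∀ z, ‖B.kerᗮ.starProjection z‖ ≤ C * ‖B z‖ := by
  set f := B ∘L B.kerᗮ.subtypeL
  have hinj : Function.Injective f := by
    refine (injective_iff_map_eq_zero f).mpr fun x hx => ?_
    have hmem : (x : E) ∈ B.ker ⊓ B.kerᗮ := ⟨LinearMap.mem_ker.mpr hx, x.2⟩
    rw [B.ker.inf_orthogonal_eq_bot, Submodule.mem_bot] at hmem
    exact Subtype.ext hmem
  have hrange : Set.range f = B.range := by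
    ext y
    refine ⟨fun ⟨x, hx⟩ => ⟨x, hx⟩, fun ⟨z, hz⟩ => ?_⟩
    exact ⟨B.kerᗮ.orthogonalProjectionOnto z, (B.apply_starProjection_orthogonal_ker z).trans hz⟩
  obtain ⟨C, hC⟩ := f.antilipschitz_of_injective_of_isClosed_range hinj (hrange ▸ hB)
  refine ⟨C, fun z => ?_⟩
  have := f.bound_of_antilipschitz hC (B.kerᗮ.orthogonalProjectionOnto z)
  rwa [coe_comp, Function.comp_apply, Submodule.subtypeL_apply, ← Submodule.starProjection_apply,
    B.apply_starProjection_orthogonal_ker] at this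

lemma norm_starProjection_range_le [B.range.HasOrthogonalProjection] {C : ℝ≥0}
    (hC : ∀ z, ‖B.kerᗮ.starProjection z‖ ≤ C * ‖B z‖) (y : F) :
    ‖B.range.starProjection y‖ ≤ C * ‖adjoint B y‖ := by
  set y₁ := B.range.starProjection y
  obtain ⟨z, hz⟩ : ∃ z, B z = y₁ := B.range.starProjection_apply_mem y
  have hadj : adjoint B y₁ = adjoint B y := by
    have h : y - y₁ ∈ (adjoint B).ker :=
      B.orthogonal_range ▸ B.range.sub_starProjection_mem_orthogonal y
    rw [LinearMap.mem_ker, map_sub, sub_eq_zero] at h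
    exact h.symm
  have hsq : ‖y₁‖ * ‖y₁‖ ≤ C * ‖adjoint B y₁‖ * ‖y₁‖ :=
    calc ‖y₁‖ * ‖y₁‖ = ⟪y₁, B (B.kerᗮ.starProjection z)⟫ := by
          rw [apply_starProjection_orthogonal_ker, hz, real_inner_self_eq_norm_mul_norm]
      _ = ⟪adjoint B y₁, B.kerᗮ.starProjection z⟫ := (adjoint_inner_left _ _ _).symm
      _ ≤ ‖adjoint B y₁‖ * ‖B.kerᗮ.starProjection z‖ := real_inner_le_norm _ _
      _ ≤ ‖adjoint B y₁‖ * (C * ‖B z‖) := by gcongr; exact hC z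
      _ = C * ‖adjoint B y₁‖ * ‖y₁‖ := by rw [hz]; ring
  rw [← hadj]
  rcases (norm_nonneg y₁).eq_or_lt with h | h
  · rw [← h]; positivity
  · exact le_of_mul_le_mul_right hsq h

lemma mul_norm_le_of_coercive_on_ker (Q : E →L[ℝ] E) {α ρ : ℝ} {C : ℝ≥0} (hα : 0 ≤ α)
    (hρ : 0 ≤ ρ) (hQ : ∀ u ∈ B.ker, α * ‖u‖ ^ 2 ≤ ⟪Q u, u⟫)
    (hC : ∀ z, ‖B.kerᗮ.starProjection z‖ ≤ C * ‖B z‖) (z : E) (lam : F) :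
    α * ‖z‖ ≤ ‖Q z + adjoint B lam‖ + (α + ‖Q‖) * C * (‖B z - ρ • lam‖ + ρ * ‖lam‖) := by
  set u := B.ker.starProjection z
  set v := B.kerᗮ.starProjection z
  have hzuv : z = u + v := (B.ker.starProjection_add_starProjection_orthogonal z).symm
  have hu : α * ‖u‖ ≤ ‖Q u + adjoint B lam‖ := by
    refine mul_norm_le_norm_of_mul_sq_le_inner ?_
    have hBu : B u = 0 := B.ker.starProjection_apply_mem z
    rw [inner_add_left, adjoint_inner_left, hBu, inner_zero_right, add_zero]
    exact hQ u (B.ker.starProjection_apply_mem z)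
  have hQu : ‖Q u + adjoint B lam‖ ≤ ‖Q z + adjoint B lam‖ + ‖Q‖ * ‖v‖ :=
    calc ‖Q u + adjoint B lam‖ = ‖(Q z + adjoint B lam) - Q v‖ := by rw [hzuv, map_add]; abel_nf
      _ ≤ ‖Q z + adjoint B lam‖ + ‖Q v‖ := norm_sub_le _ _
      _ ≤ ‖Q z + adjoint B lam‖ + ‖Q‖ * ‖v‖ := by gcongr; exact Q.le_opNorm v
  have hBz : ‖B z‖ ≤ ‖B z - ρ • lam‖ + ρ * ‖lam‖ := by
    simpa [norm_smul, abs_of_nonneg hρ] using norm_le_norm_sub_add (B z) (ρ • lam)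
  calc α * ‖z‖ ≤ α * ‖u‖ + α * ‖v‖ := by rw [← mul_add, hzuv]; gcongr; exact norm_add_le u v
    _ ≤ ‖Q z + adjoint B lam‖ + (α + ‖Q‖) * ‖v‖ := by linarith
    _ ≤ ‖Q z + adjoint B lam‖ + (α + ‖Q‖) * (C * ‖B z‖) := by gcongr; exact hC z
    _ ≤ ‖Q z + adjoint B lam‖ + (α + ‖Q‖) * C * (‖B z - ρ • lam‖ + ρ * ‖lam‖) := by
      rw [← mul_assoc]; gcongr

lemma mul_norm_le_of_norm_starProjection_range_le [B.range.HasOrthogonalProjection]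
    (Q : E →L[ℝ] E) {ρ : ℝ} {C : ℝ≥0} (hρ : 0 ≤ ρ)
    (hC : ∀ y, ‖B.range.starProjection y‖ ≤ C * ‖adjoint B y‖) (z : E) (lam : F) :
    ρ * ‖lam‖ ≤ ρ * C * (‖Q z + adjoint B lam‖ + ‖Q‖ * ‖z‖) + ‖B z - ρ • lam‖ := by
  have hperp : ρ • B.rangeᗮ.starProjection lam = B.rangeᗮ.starProjection (ρ • lam - B z) := by
    have hBz : B.rangeᗮ.starProjection (B z) = 0 :=
      Submodule.starProjection_orthogonal_apply_eq_zero (LinearMap.mem_range_self _ z)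
    rw [map_sub, map_smul, hBz, sub_zero]
  have hadj : ‖adjoint B lam‖ ≤ ‖Q z + adjoint B lam‖ + ‖Q‖ * ‖z‖ := by
    have h := norm_le_insert' (adjoint B lam) (Q z + adjoint B lam)
    rw [sub_add_cancel_right, norm_neg] at h
    linarith [Q.le_opNorm z]
  calc ρ * ‖lam‖ ≤ ρ * ‖B.range.starProjection lam‖ + ‖ρ • B.rangeᗮ.starProjection lam‖ := by
        rw [norm_smul, Real.norm_of_nonneg hρ, ← mul_add]
        gcongr
        conv_lhs => rw [← B.range.starProjection_add_starProjection_orthogonal lam]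
        exact norm_add_le _ _
    _ ≤ ρ * (C * ‖adjoint B lam‖) + ‖B z - ρ • lam‖ := by
        rw [hperp, norm_sub_rev]
        gcongr
        · exact hC lam
        · exact B.rangeᗮ.norm_starProjection_apply_le _
    _ ≤ ρ * C * (‖Q z + adjoint B lam‖ + ‖Q‖ * ‖z‖) + ‖B z - ρ • lam‖ := by
        rw [mul_assoc]
        gcongr

end ContinuousLinearMap

theorem stmt4_general
    {Z Y : Type*} [NormedAddCommGroup Z] [InnerProductSpace ℝ Z] [CompleteSpace Z]
    [NormedAddCommGroup Y] [InnerProductSpace ℝ Y] [CompleteSpace Y]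
    (B : Z →L[ℝ] Y)
    (hBrange : IsClosed (LinearMap.range (B : Z →ₗ[ℝ] Y) : Set Y))
    (Q : Z →L[ℝ] Z)
    (α : ℝ) (hα : 0 < α)
    (hQcoer : ∀ z ∈ LinearMap.ker (B : Z →ₗ[ℝ] Y), α * ‖z‖ ^ 2 ≤ (inner ℝ (Q z) z : ℝ)) :
    ∃ κ > (0 : ℝ), ∃ c₁ > (0 : ℝ), ∀ ρ : ℝ, 0 < ρ → ρ ≤ κ →
      ∀ (z : Z) (lam : Y),
        ‖z‖ + ρ * ‖lam‖ ≤
          c₁ * (‖Q z + (ContinuousLinearMap.adjoint B) lam‖ + ‖B z - ρ • lam‖) := by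
  have : CompleteSpace B.range := hBrange.completeSpace_coe
  obtain ⟨C, hC⟩ := B.exists_norm_starProjection_orthogonal_ker_le hBrange
  set M := ‖Q‖
  set κ := α / (2 * (α + M) * C ^ 2 * M + 1)
  have hκ : 0 < κ := by positivity
  have hgain : 2 * ((α + M) * C) * (κ * C * M) ≤ α := by
    have : (2 * (α + M) * C ^ 2 * M + 1) * κ = α := mul_div_cancel₀ _ (by positivity)
    nlinarith
  obtain ⟨c₁, hc₁, hbound⟩ := exists_add_le_of_small_gain (p := 1 + (α + M) * C)
    (r := κ * C + 1) hα (by positivity) (by positivity) (by positivity) (by positivity) hgain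
  refine ⟨κ, hκ, c₁, hc₁, fun ρ hρ hρκ z lam => hbound _ _ _ (norm_nonneg z) (by positivity) ?_ ?_⟩
  · nlinarith [B.mul_norm_le_of_coercive_on_ker Q hα.le hρ.le hQcoer hC z lam,
      mul_nonneg (by positivity : (0 : ℝ) ≤ (α + M) * C)
        (norm_nonneg (Q z + ContinuousLinearMap.adjoint B lam)), norm_nonneg (B z - ρ • lam)]
  · calc ρ * ‖lam‖
        ≤ ρ * C * (‖Q z + ContinuousLinearMap.adjoint B lam‖ + M * ‖z‖) + ‖B z - ρ • lam‖ :=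
          B.mul_norm_le_of_norm_starProjection_range_le Q hρ.le
            (B.norm_starProjection_range_le hC) z lam
      _ ≤ κ * C * (‖Q z + ContinuousLinearMap.adjoint B lam‖ + M * ‖z‖) + ‖B z - ρ • lam‖ := by
          gcongr
      _ ≤ _ := by
        nlinarith [mul_nonneg (by positivity : (0 : ℝ) ≤ κ * C) (norm_nonneg (B z - ρ • lam)),
          norm_nonneg (Q z + ContinuousLinearMap.adjoint B lam)]

/-- Let `Z`, `Y` be real Hilbert spaces, `B : Z → Y` Fredholm,
`Q : Z → Z` bounded self-adjoint with `⟪Qz, z⟫ ≥ α‖z‖²` on `ker B` for some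
`α > 0`.  Then there exist `κ > 0` and `c₁ > 0` such that for every `ρ ∈ (0, κ]`
and every `(z, λ) ∈ Z × Y`:
`‖z‖ + ρ‖λ‖ ≤ c₁ (‖Qz + B†λ‖ + ‖Bz − ρλ‖)`. -/
theorem stmt4
    {Z Y : Type*} [NormedAddCommGroup Z] [InnerProductSpace ℝ Z] [CompleteSpace Z]
    [NormedAddCommGroup Y] [InnerProductSpace ℝ Y] [CompleteSpace Y]
    (B : Z →L[ℝ] Y)
    (hBker : FiniteDimensional ℝ (LinearMap.ker (B : Z →ₗ[ℝ] Y)))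
    (hBrange : IsClosed (LinearMap.range (B : Z →ₗ[ℝ] Y) : Set Y))
    (hBcodim : FiniteDimensional ℝ (Y ⧸ LinearMap.range (B : Z →ₗ[ℝ] Y)))
    (Q : Z →L[ℝ] Z)
    (hQsym : ∀ z₁ z₂ : Z, (inner ℝ (Q z₁) z₂ : ℝ) = inner ℝ (Q z₂) z₁)
    (α : ℝ) (hα : 0 < α)
    (hQcoer : ∀ z ∈ LinearMap.ker (B : Z →ₗ[ℝ] Y), α * ‖z‖ ^ 2 ≤ (inner ℝ (Q z) z : ℝ)) :
    ∃ κ > (0 : ℝ), ∃ c₁ > (0 : ℝ), ∀ ρ : ℝ, 0 < ρ → ρ ≤ κ →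
      ∀ (z : Z) (lam : Y),
        ‖z‖ + ρ * ‖lam‖ ≤
          c₁ * (‖Q z + (ContinuousLinearMap.adjoint B) lam‖ + ‖B z - ρ • lam‖) :=
  stmt4_general B hBrange Q α hα hQcoer
end

section
/- Let Z and Y be real Hilbert spaces, B : Z → Y a Fredholm bounded linear operator, and Q : Z → Z a bounded self-adjoint linear operator such that ⟪Qz, z⟫ ≥ α‖z‖² for all z ∈ ker B, for some α > 0. Then there exists σ > 0 such that for every ρ ∈ (0, σ] the bounded linear operator A_ρ : Z × Y → Z × Y, A_ρ(z, λ) = (Qz + B†λ, Bz − ρλ), is bijective (hence has a bounded inverse). -/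
/-!
Eliminating the multiplier `λ = ρ⁻¹ (B z - g)` from `A_ρ (z, λ) = (f, g)` leaves the equation
`(ρ Q + B† B) z = ρ f + B† g`, so it suffices that `ρ Q + B† B` is bijective; by Lax–Milgram it
is enough that this operator is coercive. Split `z = u + v` with `u ∈ ker B`, `v ⊥ ker B`.
Closed range makes `B` bounded below on `(ker B)ᗮ`, `‖v‖ ≤ C ‖B v‖`, so `‖B z‖²` controls `‖v‖²`,
while `ρ ⟪Q z, z⟫ ≥ ρ α ‖u‖²` up to cross terms of size `ρ ‖Q‖ ‖z‖ ‖v‖`. For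
`ρ (α² + 2‖Q‖²) C² ≤ α` Young's inequality absorbs these, giving `⟪(ρ Q + B† B) z, z⟫ ≥ ρ α ‖z‖² / 2`.
-/

open RealInnerProductSpace

theorem LinearMap.bijective_saddlePoint_of_bijective {𝕜 Z Y : Type*} [Field 𝕜]
    [AddCommGroup Z] [Module 𝕜 Z] [AddCommGroup Y] [Module 𝕜 Y]
    (Q : Z →ₗ[𝕜] Z) (G : Y →ₗ[𝕜] Z) (B : Z →ₗ[𝕜] Y) {ρ : 𝕜} (hρ : ρ ≠ 0)
    (hT : Function.Bijective (ρ • Q + G ∘ₗ B)) :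
    Function.Bijective (fun w : Z × Y => (Q w.1 + G w.2, B w.1 - ρ • w.2)) := by
  let A : Z × Y →ₗ[𝕜] Z × Y := (Q.coprod G).prod (B.coprod (-ρ • LinearMap.id))
  have hA : ⇑A = fun w : Z × Y => (Q w.1 + G w.2, B w.1 - ρ • w.2) := by
    ext w <;> simp [A, sub_eq_add_neg]
  rw [← hA]
  refine ⟨(injective_iff_map_eq_zero A).2 fun ⟨z, l⟩ hzl => ?_, fun ⟨f, g⟩ => ?_⟩
  · rw [hA, Prod.mk_eq_zero, sub_eq_zero] at hzl
    obtain ⟨hQG, hBz⟩ := hzl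
    have hz : z = 0 := hT.1 <| by simp [hBz, ← smul_add, hQG]
    rw [hz, map_zero, eq_comm, smul_eq_zero] at hBz
    simpa [hz, hρ] using hBz
  · obtain ⟨z, hz⟩ := hT.2 (ρ • f + G g)
    refine ⟨(z, ρ⁻¹ • (B z - g)), ?_⟩
    simp only [LinearMap.add_apply, LinearMap.smul_apply, LinearMap.comp_apply] at hz
    have hGBz : G (B z) = ρ • (f - Q z) + G g := by
      rw [smul_sub, sub_add_eq_add_sub, ← hz]; abel
    simp [hA, smul_smul, hρ, hGBz]

theorem ContinuousLinearMap.bijective_of_coercive {V : Type*} [NormedAddCommGroup V]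
    [InnerProductSpace ℝ V] [CompleteSpace V] (T : V →L[ℝ] V) {c : ℝ} (hc : 0 < c)
    (hT : ∀ v, c * ‖v‖ ^ 2 ≤ ⟪T v, v⟫) : Function.Bijective T := by
  have hcoer : IsCoercive ((innerSL ℝ).comp T) :=
    ⟨c, hc, fun v => by simpa [sq, mul_assoc] using hT v⟩
  convert hcoer.continuousLinearEquivOfBilin.bijective
  ext v
  exact ext_inner_right ℝ fun w => by simp

theorem ContinuousLinearMap.exists_norm_le_mul_norm_apply_of_mem_orthogonal_ker
    {𝕜 Z Y : Type*} [RCLike 𝕜] [NormedAddCommGroup Z] [InnerProductSpace 𝕜 Z] [CompleteSpace Z]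
    [NormedAddCommGroup Y] [NormedSpace 𝕜 Y] [CompleteSpace Y] (B : Z →L[𝕜] Y)
    (hB : IsClosed (LinearMap.range (B : Z →ₗ[𝕜] Y) : Set Y)) :
    ∃ C > 0, ∀ v ∈ (LinearMap.ker (B : Z →ₗ[𝕜] Y))ᗮ, ‖v‖ ≤ C * ‖B v‖ := by
  set K := LinearMap.ker (B : Z →ₗ[𝕜] Y)
  have : CompleteSpace K := B.isClosed_ker.completeSpace_coe
  have hrange : Set.range (B ∘L Kᗮ.subtypeL) = Set.range B := by
    refine subset_antisymm (fun _ ⟨v, hv⟩ => ⟨v, hv⟩) ?_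
    rintro _ ⟨z, rfl⟩
    obtain ⟨u, hu, v, hv, rfl⟩ := K.exists_add_mem_mem_orthogonal z
    exact ⟨⟨v, hv⟩, by simp [show B u = 0 from hu]⟩
  have hinj : Function.Injective (B ∘L Kᗮ.subtypeL) := by
    refine (injective_iff_map_eq_zero _).2 fun v hv => Subtype.ext ?_
    exact Submodule.disjoint_def.1 K.orthogonal_disjoint v hv v.2
  obtain ⟨C, hC⟩ := (B ∘L Kᗮ.subtypeL).antilipschitz_of_injective_of_isClosed_range hinj
    (by rw [hrange]; exact hB)
  refine ⟨C + 1, by positivity, fun v hv => ?_⟩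
  calc ‖v‖ ≤ C * ‖B v‖ := (B ∘L Kᗮ.subtypeL).bound_of_antilipschitz hC ⟨v, hv⟩
    _ ≤ (C + 1) * ‖B v‖ := by gcongr; linarith

theorem ContinuousLinearMap.mul_norm_sq_le_inner_add_norm_sq_of_coercive_on_ker
    {Z Y : Type*} [NormedAddCommGroup Z] [InnerProductSpace ℝ Z] [CompleteSpace Z]
    [NormedAddCommGroup Y] [NormedSpace ℝ Y] (B : Z →L[ℝ] Y) (Q : Z →L[ℝ] Z)
    {α C ρ : ℝ} (hα : 0 < α) (hρ : 0 ≤ ρ)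
    (hQ : ∀ u ∈ LinearMap.ker (B : Z →ₗ[ℝ] Y), α * ‖u‖ ^ 2 ≤ ⟪Q u, u⟫)
    (hC : ∀ v ∈ (LinearMap.ker (B : Z →ₗ[ℝ] Y))ᗮ, ‖v‖ ≤ C * ‖B v‖)
    (hρC : ρ * (α ^ 2 + 2 * ‖Q‖ ^ 2) * C ^ 2 ≤ α) (z : Z) :
    ρ * α / 2 * ‖z‖ ^ 2 ≤ ρ * ⟪Q z, z⟫ + ‖B z‖ ^ 2 := by
  set K := LinearMap.ker (B : Z →ₗ[ℝ] Y)
  have : CompleteSpace K := B.isClosed_ker.completeSpace_coe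
  obtain ⟨u, hu, v, hv, rfl⟩ := K.exists_add_mem_mem_orthogonal z
  have hBz : B (u + v) = B v := by simp [show B u = 0 from hu]
  have hnorm : ‖u + v‖ ^ 2 = ‖u‖ ^ 2 + ‖v‖ ^ 2 := by
    simpa [sq] using norm_add_sq_eq_norm_sq_add_norm_sq_real (hv u hu)
  have hu_le : ‖u‖ ≤ ‖u + v‖ := by nlinarith [norm_nonneg u, norm_nonneg (u + v), sq_nonneg ‖v‖]
  have hQ_expand : ⟪Q (u + v), u + v⟫ = ⟪Q u, u⟫ + ⟪Q (u + v), v⟫ + ⟪Q v, u⟫ := by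
    simp only [map_add, inner_add_left, inner_add_right]; ring
  have hcross₁ : |⟪Q (u + v), v⟫| ≤ ‖Q‖ * ‖u + v‖ * ‖v‖ :=
    (abs_real_inner_le_norm _ _).trans (by gcongr; exact Q.le_opNorm _)
  have hcross₂ : |⟪Q v, u⟫| ≤ ‖Q‖ * ‖u + v‖ * ‖v‖ := by
    calc |⟪Q v, u⟫| ≤ ‖Q v‖ * ‖u‖ := abs_real_inner_le_norm _ _
      _ ≤ ‖Q‖ * ‖v‖ * ‖u + v‖ := by gcongr; exact Q.le_opNorm _
      _ = ‖Q‖ * ‖u + v‖ * ‖v‖ := by ring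
  have hv_sq : ‖v‖ ^ 2 ≤ C ^ 2 * ‖B v‖ ^ 2 := by
    have := hC v hv
    nlinarith [norm_nonneg v]
  have hQz : α * ‖u + v‖ ^ 2 - α * ‖v‖ ^ 2 - 2 * ‖Q‖ * ‖u + v‖ * ‖v‖ ≤ ⟪Q (u + v), u + v⟫ := by
    rw [hQ_expand, hnorm]
    linarith [hQ u hu, neg_abs_le ⟪Q (u + v), v⟫, neg_abs_le ⟪Q v, u⟫]
  have hyoung :
      2 * α * ‖Q‖ * ‖u + v‖ * ‖v‖ ≤ α ^ 2 / 2 * ‖u + v‖ ^ 2 + 2 * ‖Q‖ ^ 2 * ‖v‖ ^ 2 := by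
    nlinarith [sq_nonneg (α * ‖u + v‖ - 2 * ‖Q‖ * ‖v‖)]
  have habsorb : ρ * (α ^ 2 + 2 * ‖Q‖ ^ 2) * ‖v‖ ^ 2 ≤ α * ‖B v‖ ^ 2 := by
    nlinarith [mul_le_mul_of_nonneg_left hv_sq (by positivity : 0 ≤ ρ * (α ^ 2 + 2 * ‖Q‖ ^ 2))]
  rw [hBz]
  refine le_of_mul_le_mul_left ?_ hα
  nlinarith [mul_le_mul_of_nonneg_left hQz (mul_nonneg hρ hα.le),
    mul_le_mul_of_nonneg_left hyoung hρ]

theorem stmt5_general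
    {Z Y : Type*} [NormedAddCommGroup Z] [InnerProductSpace ℝ Z] [CompleteSpace Z]
    [NormedAddCommGroup Y] [InnerProductSpace ℝ Y] [CompleteSpace Y]
    (B : Z →L[ℝ] Y)
    (hBrange : IsClosed (LinearMap.range (B : Z →ₗ[ℝ] Y) : Set Y))
    (Q : Z →L[ℝ] Z)
    (α : ℝ) (hα : 0 < α)
    (hQcoer : ∀ z ∈ LinearMap.ker (B : Z →ₗ[ℝ] Y), α * ‖z‖ ^ 2 ≤ (inner ℝ (Q z) z : ℝ)) :
    ∃ σ > (0 : ℝ), ∀ ρ : ℝ, 0 < ρ → ρ ≤ σ →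
      Function.Bijective (fun w : Z × Y =>
        ((Q w.1 + (ContinuousLinearMap.adjoint B) w.2, B w.1 - ρ • w.2) : Z × Y)) := by
  obtain ⟨C, hC, hBbelow⟩ := B.exists_norm_le_mul_norm_apply_of_mem_orthogonal_ker hBrange
  refine ⟨α / ((α ^ 2 + 2 * ‖Q‖ ^ 2) * C ^ 2), by positivity, fun ρ hρ hρσ => ?_⟩
  have hρC : ρ * (α ^ 2 + 2 * ‖Q‖ ^ 2) * C ^ 2 ≤ α := by
    rwa [mul_assoc, ← le_div_iff₀ (by positivity)]
  refine LinearMap.bijective_saddlePoint_of_bijective (Q : Z →ₗ[ℝ] Z)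
    (ContinuousLinearMap.adjoint B : Y →ₗ[ℝ] Z) (B : Z →ₗ[ℝ] Y) hρ.ne' ?_
  refine (ρ • Q + (ContinuousLinearMap.adjoint B).comp B).bijective_of_coercive
    (by positivity : 0 < ρ * α / 2) fun z => ?_
  have h := B.mul_norm_sq_le_inner_add_norm_sq_of_coercive_on_ker Q hα hρ.le hQcoer hBbelow hρC z
  simpa [inner_add_left, real_inner_smul_left, ContinuousLinearMap.adjoint_inner_left,
    real_inner_self_eq_norm_sq] using h

/-- Let `Z`, `Y` be real Hilbert spaces, `B : Z → Y` Fredholm,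
`Q : Z → Z` bounded self-adjoint with `⟪Qz, z⟫ ≥ α‖z‖²` on `ker B` for some
`α > 0`.  Then there exists `σ > 0` such that for every `ρ ∈ (0, σ]` the
bounded linear operator `A_ρ(z, λ) = (Qz + B†λ, Bz − ρλ)` on `Z × Y` is
bijective. -/
theorem stmt5
    {Z Y : Type*} [NormedAddCommGroup Z] [InnerProductSpace ℝ Z] [CompleteSpace Z]
    [NormedAddCommGroup Y] [InnerProductSpace ℝ Y] [CompleteSpace Y]
    (B : Z →L[ℝ] Y)
    (hBker : FiniteDimensional ℝ (LinearMap.ker (B : Z →ₗ[ℝ] Y)))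
    (hBrange : IsClosed (LinearMap.range (B : Z →ₗ[ℝ] Y) : Set Y))
    (hBcodim : FiniteDimensional ℝ (Y ⧸ LinearMap.range (B : Z →ₗ[ℝ] Y)))
    (Q : Z →L[ℝ] Z)
    (hQsym : ∀ z₁ z₂ : Z, (inner ℝ (Q z₁) z₂ : ℝ) = inner ℝ (Q z₂) z₁)
    (α : ℝ) (hα : 0 < α)
    (hQcoer : ∀ z ∈ LinearMap.ker (B : Z →ₗ[ℝ] Y), α * ‖z‖ ^ 2 ≤ (inner ℝ (Q z) z : ℝ)) :
    ∃ σ > (0 : ℝ), ∀ ρ : ℝ, 0 < ρ → ρ ≤ σ →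
      Function.Bijective (fun w : Z × Y =>
        ((Q w.1 + (ContinuousLinearMap.adjoint B) w.2, B w.1 - ρ • w.2) : Z × Y)) :=
  stmt5_general B hBrange Q α hα hQcoer
end

section
/- Let X and Y be real Hilbert spaces, let y₁, …, y_m ∈ Y, set S = span{y₁, …, y_m} and K = {Σᵢ μᵢ yᵢ : μᵢ ≥ 0} with polar cone K° = {λ ∈ Y : ⟪λ, y⟫ ≤ 0 for all y ∈ K}. Let B : X → Y be a Fredholm bounded linear operator and Q : X → X a bounded self-adjoint linear operator such that ⟪Qx, x⟫ ≥ α‖x‖² for some α > 0 and all x ∈ X with Bx ∈ S (in particular for all x ∈ ker B). Then there exists σ > 0 such that for every ρ ∈ (0, σ] and every pair (φ, r) ∈ X × Y the system: λ ∈ K°, Qz + B†λ + φ = 0, Bz + r − ρλ ∈ K, and ⟪λ, Bz + r − ρλ⟫ = 0, has exactly one solution (z, λ) ∈ X × Y. -/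
/-!
Write `P` for the nearest-point projection onto the closed convex cone `K`. The conditions
`λ ∈ K°`, `Bz + r - ρλ ∈ K`, `⟪λ, Bz + r - ρλ⟫ = 0` say that `Bz + r = P(Bz + r) + ρλ` is the
Moreau decomposition of `Bz + r` along `K` and `K°`, so the system is equivalent to
`λ = ρ⁻¹ (I - P)(Bz + r)` together with the single equation
`T z := Qz + ρ⁻¹ B† (I - P)(Bz + r) + φ = 0`.

The map `I - P` is firmly nonexpansive, and its increments `n` differ from the increments
`B d` of its argument by elements of `S = span K`. As `B` has closed range, the open mapping
theorem puts `d` within `c ‖n‖` of `B⁻¹ S`, where `Q` is coercive; the loss `O(‖n‖²)` is paid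
for by the term `ρ⁻¹ ⟪n, B d⟫ ≥ ρ⁻¹ ‖n‖²` once `ρ` is small. So `T` is strongly monotone and
Lipschitz, hence has exactly one zero by the Banach fixed point theorem. The projection `P` exists
because a finitely generated cone is closed (conic Carathéodory).
-/

open scoped RealInnerProductSpace NNReal

section Cone

variable {ι Y : Type*} [AddCommGroup Y] [Module ℝ Y]

def conicCombinations (v : ι → Y) (T : Finset ι) : PointedCone ℝ Y where
  carrier := {x | ∃ μ : ι → ℝ, (∀ i ∈ T, 0 ≤ μ i) ∧ x = ∑ i ∈ T, μ i • v i}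
  add_mem' := by
    rintro _ _ ⟨μ, hμ, rfl⟩ ⟨ν, hν, rfl⟩
    exact ⟨μ + ν, fun i hi => add_nonneg (hμ i hi) (hν i hi), by
      simp only [Pi.add_apply, add_smul, Finset.sum_add_distrib]⟩
  zero_mem' := ⟨0, fun _ _ => le_rfl, by simp⟩
  smul_mem' := by
    rintro ⟨t, ht⟩ _ ⟨μ, hμ, rfl⟩
    exact ⟨t • μ, fun i hi => mul_nonneg ht (hμ i hi), by
      simp [Nonneg.mk_smul, Finset.smul_sum, smul_smul]⟩

variable {v : ι → Y}

theorem conicCombinations_mono {T T' : Finset ι} (h : T' ⊆ T) :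
    conicCombinations v T' ≤ conicCombinations v T := by
  classical
  rintro x ⟨μ, hμ, rfl⟩
  refine ⟨fun i => if i ∈ T' then μ i else 0, fun i _ => ?_, ?_⟩
  · dsimp only
    split_ifs with hi
    exacts [hμ i hi, le_rfl]
  · refine Finset.sum_subset_zero_on_sdiff h (fun i hi => ?_) (fun i hi => ?_)
    · simp [(Finset.mem_sdiff.mp hi).2]
    · simp [hi]

theorem mem_span_of_mem_conicCombinations {T : Finset ι} {x : Y}
    (hx : x ∈ conicCombinations v T) : x ∈ Submodule.span ℝ (Set.range v) := by
  obtain ⟨μ, -, rfl⟩ := hx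
  exact Submodule.sum_mem _ fun i _ => Submodule.smul_mem _ _ (Submodule.subset_span ⟨i, rfl⟩)

/-- Subtracting from `μ` the largest multiple of the relation `f` that keeps all coefficients
nonnegative makes one of them vanish. -/
theorem mem_conicCombinations_erase_of_sum_eq_zero [DecidableEq ι] {T : Finset ι} {x : Y}
    (hx : x ∈ conicCombinations v T) {f : ι → ℝ} (hf : ∑ i ∈ T, f i • v i = 0)
    {j : ι} (hj : j ∈ T) (hfj : 0 < f j) :
    ∃ k ∈ T, x ∈ conicCombinations v (T.erase k) := by
  obtain ⟨μ, hμ, rfl⟩ := hx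
  obtain ⟨k, hk, hmin⟩ := (T.filter (0 < f ·)).exists_min_image (fun i => μ i / f i)
    ⟨j, Finset.mem_filter.mpr ⟨hj, hfj⟩⟩
  rw [Finset.mem_filter] at hk
  set t := μ k / f k
  have ht : 0 ≤ t := div_nonneg (hμ k hk.1) hk.2.le
  refine ⟨k, hk.1, fun i => μ i - t * f i, fun i hi => ?_, ?_⟩
  · rcases lt_or_ge 0 (f i) with hfi | hfi
    · have := hmin i (Finset.mem_filter.mpr ⟨Finset.mem_of_mem_erase hi, hfi⟩)
      rw [le_div_iff₀ hfi] at this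
      linarith
    · nlinarith [hμ i (Finset.mem_of_mem_erase hi)]
  · have hk0 : μ k - t * f k = 0 := by simp [t, div_mul_cancel₀ _ hk.2.ne']
    rw [Finset.sum_erase (f := fun i => (μ i - t * f i) • v i) _ (by simp only [hk0, zero_smul]),
      eq_comm]
    simp only [sub_smul, Finset.sum_sub_distrib, mul_smul, ← Finset.smul_sum, hf, smul_zero,
      sub_zero]

theorem exists_linearIndepOn_of_mem_conicCombinations {T : Finset ι} {x : Y}
    (hx : x ∈ conicCombinations v T) :
    ∃ T' ⊆ T, LinearIndepOn ℝ v T' ∧ x ∈ conicCombinations v T' := by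
  classical
  induction T using Finset.strongInduction generalizing x with
  | H T ih =>
    by_cases hT : LinearIndepOn ℝ v T
    · exact ⟨T, subset_rfl, hT, hx⟩
    obtain ⟨f, hf, j, hj, hfj⟩ := not_linearIndepOn_finset_iff.mp hT
    obtain ⟨k, hk, hxk⟩ : ∃ k ∈ T, x ∈ conicCombinations v (T.erase k) := by
      rcases hfj.lt_or_gt with hneg | hpos
      · refine mem_conicCombinations_erase_of_sum_eq_zero hx (f := -f) ?_ hj (by simpa)
        simp [neg_smul, Finset.sum_neg_distrib, hf]
      · exact mem_conicCombinations_erase_of_sum_eq_zero hx hf hj hpos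
    obtain ⟨T', hT', hind, hxT'⟩ := ih _ (Finset.erase_ssubset hk) hxk
    exact ⟨T', hT'.trans (Finset.erase_subset _ _), hind, hxT'⟩

end Cone

section Closed

variable {ι Y : Type*} [NormedAddCommGroup Y] [NormedSpace ℝ Y] {v : ι → Y}

theorem coe_conicCombinations_eq_image (T : Finset ι) :
    (conicCombinations v T : Set Y) =
      Fintype.linearCombination ℝ (fun i : T => v i) '' Set.Ici 0 := by
  classical
  ext x
  constructor
  · rintro ⟨μ, hμ, rfl⟩
    refine ⟨fun i => μ i, fun i => hμ i i.2, ?_⟩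
    rw [Fintype.linearCombination_apply, ← Finset.sum_coe_sort T]
  · rintro ⟨ν, hν, rfl⟩
    refine ⟨fun i => if h : i ∈ T then ν ⟨i, h⟩ else 0,
      fun i hi => by simpa [hi] using hν ⟨i, hi⟩, ?_⟩
    rw [Fintype.linearCombination_apply, ← Finset.sum_coe_sort T]
    simp

theorem isClosed_conicCombinations_of_linearIndepOn {T : Finset ι}
    (hT : LinearIndepOn ℝ v T) : IsClosed (conicCombinations v T : Set Y) := by
  rw [coe_conicCombinations_eq_image]
  have hinj : LinearMap.ker (Fintype.linearCombination ℝ (fun i : T => v i)) = ⊥ :=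
    LinearMap.ker_eq_bot.mpr hT.fintypeLinearCombination_injective
  exact (LinearMap.isClosedEmbedding_of_injective hinj).isClosedMap _ isClosed_Ici

theorem isClosed_conicCombinations [Finite ι] (T : Finset ι) :
    IsClosed (conicCombinations v T : Set Y) := by
  classical
  have : (conicCombinations v T : Set Y) =
      ⋃ T' ∈ {T' : Finset ι | T' ⊆ T ∧ LinearIndepOn ℝ v T'}, (conicCombinations v T' : Set Y) := by
    refine subset_antisymm (fun x hx => ?_)
      (Set.iUnion₂_subset fun T' hT' => conicCombinations_mono hT'.1)
    obtain ⟨T', hT', hind, hx'⟩ := exists_linearIndepOn_of_mem_conicCombinations hx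
    exact Set.mem_biUnion ⟨hT', hind⟩ hx'
  rw [this]
  exact Set.Finite.isClosed_biUnion (Set.toFinite _) fun T' hT' =>
    isClosed_conicCombinations_of_linearIndepOn hT'.2

end Closed

namespace ProperCone

variable {Y : Type*} [NormedAddCommGroup Y] [InnerProductSpace ℝ Y] [CompleteSpace Y]
  (C : ProperCone ℝ Y)

theorem exists_norm_sub_eq_iInf (v : Y) :
    ∃ p ∈ C, ‖v - p‖ = ⨅ w : (C : Set Y), ‖v - w‖ :=
  exists_norm_eq_iInf_of_complete_convex C.nonempty C.isClosed.isComplete C.convex v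

noncomputable def proj (v : Y) : Y := (C.exists_norm_sub_eq_iInf v).choose

variable {C}

theorem proj_mem (v : Y) : C.proj v ∈ C := (C.exists_norm_sub_eq_iInf v).choose_spec.1

theorem inner_sub_proj_sub_proj_nonpos (v : Y) {w : Y} (hw : w ∈ C) :
    ⟪v - C.proj v, w - C.proj v⟫ ≤ 0 :=
  (norm_eq_iInf_iff_real_inner_le_zero C.convex (proj_mem v)).mp
    (C.exists_norm_sub_eq_iInf v).choose_spec.2 w hw

theorem inner_sub_proj_nonpos (v : Y) {y : Y} (hy : y ∈ C) : ⟪v - C.proj v, y⟫ ≤ 0 := by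
  simpa using inner_sub_proj_sub_proj_nonpos v (add_mem (proj_mem v) hy)

theorem inner_sub_proj_proj (v : Y) : ⟪v - C.proj v, C.proj v⟫ = 0 := by
  refine le_antisymm (inner_sub_proj_nonpos v (proj_mem v)) ?_
  simpa using inner_sub_proj_sub_proj_nonpos v C.zero_mem

theorem eq_proj {v s : Y} (hs : s ∈ C) (hpolar : ∀ y ∈ C, ⟪v - s, y⟫ ≤ 0)
    (horth : ⟪v - s, s⟫ = 0) : s = C.proj v := by
  have h₁ := inner_sub_proj_nonpos v hs
  have h₂ := hpolar _ (proj_mem v)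
  have h₃ := inner_sub_proj_proj (C := C) v
  have hle : ⟪s - C.proj v, s - C.proj v⟫ ≤ 0 := by
    simp only [inner_sub_left, inner_sub_right] at h₁ h₂ h₃ horth ⊢
    linarith
  exact sub_eq_zero.mp (inner_self_eq_zero.mp (le_antisymm hle real_inner_self_nonneg))

theorem norm_proj_sub_proj_sq_le (v₁ v₂ : Y) :
    ‖C.proj v₁ - C.proj v₂‖ ^ 2 ≤ ⟪v₁ - v₂, C.proj v₁ - C.proj v₂⟫ := by
  have h₁ := inner_sub_proj_sub_proj_nonpos v₁ (proj_mem (C := C) v₂)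
  have h₂ := inner_sub_proj_sub_proj_nonpos v₂ (proj_mem (C := C) v₁)
  rw [← real_inner_self_eq_norm_sq]
  simp only [inner_sub_left, inner_sub_right] at h₁ h₂ ⊢
  linarith

theorem norm_sub_proj_sub_sq_le (v₁ v₂ : Y) :
    ‖(v₁ - C.proj v₁) - (v₂ - C.proj v₂)‖ ^ 2 ≤ ⟪(v₁ - C.proj v₁) - (v₂ - C.proj v₂), v₁ - v₂⟫ := by
  have h := norm_proj_sub_proj_sq_le (C := C) v₁ v₂
  rw [show (v₁ - C.proj v₁) - (v₂ - C.proj v₂) = (v₁ - v₂) - (C.proj v₁ - C.proj v₂) by abel]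
  generalize v₁ - v₂ = a at h ⊢
  generalize C.proj v₁ - C.proj v₂ = b at h ⊢
  rw [norm_sub_sq_real, inner_sub_left, real_inner_self_eq_norm_sq]
  linarith [real_inner_comm a b]

theorem lipschitzWith_one_sub_proj : LipschitzWith 1 fun v => v - C.proj v := by
  refine LipschitzWith.of_dist_le_mul fun v₁ v₂ => ?_
  rw [NNReal.coe_one, one_mul, dist_eq_norm, dist_eq_norm]
  have h := (norm_sub_proj_sub_sq_le (C := C) v₁ v₂).trans (real_inner_le_norm _ _)
  nlinarith [norm_nonneg ((v₁ - C.proj v₁) - (v₂ - C.proj v₂)), norm_nonneg (v₁ - v₂)]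

theorem complementarity_iff {ρ : ℝ} (hρ : 0 < ρ) {v l : Y} :
    ((∀ y ∈ C, ⟪l, y⟫ ≤ 0) ∧ v - ρ • l ∈ C ∧ ⟪l, v - ρ • l⟫ = 0) ↔
      l = ρ⁻¹ • (v - C.proj v) := by
  rw [eq_inv_smul_iff₀ hρ.ne']
  constructor
  · rintro ⟨hpolar, hmem, horth⟩
    have hs := eq_proj (v := v) hmem (fun y hy => by
      rw [sub_sub_cancel, real_inner_smul_left]
      exact mul_nonpos_of_nonneg_of_nonpos hρ.le (hpolar y hy))
      (by rw [sub_sub_cancel, real_inner_smul_left, horth, mul_zero])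
    rw [← hs, sub_sub_cancel]
  · intro h
    have hproj : v - ρ • l = C.proj v := by rw [h, sub_sub_cancel]
    refine ⟨fun y hy => ?_, hproj ▸ proj_mem v, ?_⟩
    · have := inner_sub_proj_nonpos v hy
      rw [← h, real_inner_smul_left] at this
      exact nonpos_of_mul_nonpos_right this hρ
    · have := inner_sub_proj_proj (C := C) v
      rw [← h, ← hproj, real_inner_smul_left] at this
      exact (mul_eq_zero.mp this).resolve_left hρ.ne'

end ProperCone

section Operators

variable {X Y : Type*} [NormedAddCommGroup X] [InnerProductSpace ℝ X]
  [NormedAddCommGroup Y] [InnerProductSpace ℝ Y]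

/-- Open mapping for `(x, s) ↦ B x + s` onto the closed subspace `range B ⊔ S`. -/
theorem ContinuousLinearMap.exists_norm_sub_le_of_sub_mem [CompleteSpace X] [CompleteSpace Y]
    (B : X →L[ℝ] Y)
    (hB : IsClosed (LinearMap.range (B : X →ₗ[ℝ] Y) : Set Y))
    (S : Submodule ℝ Y) [FiniteDimensional ℝ S] :
    ∃ c > 0, ∀ d p, B d - p ∈ S → ∃ u, B u ∈ S ∧ ‖d - u‖ ≤ c * ‖p‖ := by
  set R := LinearMap.range (B : X →ₗ[ℝ] Y) ⊔ S
  have : CompleteSpace R :=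
    (Submodule.isClosed_sup_finiteDimensional _ S hB).completeSpace_coe
  let F : X × S →L[ℝ] Y := B.comp (.fst ℝ X S) + S.subtypeL.comp (.snd ℝ X S)
  have hFR : ∀ w, F w ∈ R := fun w =>
    add_mem (Submodule.mem_sup_left (LinearMap.mem_range_self _ w.1))
      (Submodule.mem_sup_right w.2.2)
  have hsurj : Function.Surjective (F.codRestrict R hFR) := by
    rintro ⟨y, hy⟩
    obtain ⟨_, ⟨x, rfl⟩, s, hs, rfl⟩ := Submodule.mem_sup.mp hy
    exact ⟨(x, ⟨s, hs⟩), rfl⟩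
  obtain ⟨c, hc, hpre⟩ := (F.codRestrict R hFR).exists_preimage_norm_le hsurj
  refine ⟨c, hc, fun d p hp => ?_⟩
  have hpR : p ∈ R := sub_sub_cancel (B d) p ▸
    sub_mem (Submodule.mem_sup_left (LinearMap.mem_range_self _ d)) (Submodule.mem_sup_right hp)
  obtain ⟨⟨x, s⟩, hxs, hnorm⟩ := hpre ⟨p, hpR⟩
  have hp' : B x + s = p := congrArg Subtype.val hxs
  refine ⟨d - x, ?_, ?_⟩
  · rw [map_sub, show B d - B x = (B d - p) + s by rw [← hp']; abel]
    exact add_mem hp s.2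
  · rw [sub_sub_cancel]
    exact (_root_.norm_fst_le _).trans hnorm

theorem ContinuousLinearMap.le_inner_map_add_self (Q : X →L[ℝ] X) {α : ℝ} (hα : 0 < α)
    {u : X} (hu : α * ‖u‖ ^ 2 ≤ ⟪Q u, u⟫) (e : X) :
    α / 4 * ‖u + e‖ ^ 2 - (α + 2 * ‖Q‖) ^ 2 / α * ‖e‖ ^ 2 ≤ ⟪Q (u + e), u + e⟫ := by
  have hcross : ∀ a b : X, -(‖Q‖ * ‖a‖ * ‖b‖) ≤ ⟪Q a, b⟫ := fun a b =>
    neg_le_of_abs_le ((abs_real_inner_le_norm _ _).trans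
      (mul_le_mul_of_nonneg_right (Q.le_opNorm a) (norm_nonneg b)))
  have hsum : ‖u + e‖ ^ 2 ≤ 2 * ‖u‖ ^ 2 + 2 * ‖e‖ ^ 2 := by
    nlinarith [norm_add_le u e, norm_nonneg (u + e), sq_nonneg (‖u‖ - ‖e‖)]
  have hQe := hcross e e
  have hQue := hcross u e
  have hQeu := hcross e u
  have hq := norm_nonneg Q
  rw [map_add, inner_add_left, inner_add_right, inner_add_right]
  have hM : (α + 2 * ‖Q‖) ^ 2 / α = α + 4 * ‖Q‖ + 4 * ‖Q‖ ^ 2 / α := by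
    field_simp; ring
  rw [hM]
  have hyoung : 2 * ‖Q‖ * ‖u‖ * ‖e‖ ≤ α / 2 * ‖u‖ ^ 2 + 2 * ‖Q‖ ^ 2 / α * ‖e‖ ^ 2 := by
    have : 0 ≤ (α * ‖u‖ - 2 * ‖Q‖ * ‖e‖) ^ 2 / (2 * α) := by positivity
    have h : (α * ‖u‖ - 2 * ‖Q‖ * ‖e‖) ^ 2 / (2 * α) =
        α / 2 * ‖u‖ ^ 2 + 2 * ‖Q‖ ^ 2 / α * ‖e‖ ^ 2 - 2 * ‖Q‖ * ‖u‖ * ‖e‖ := by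
      field_simp; ring
    linarith
  have : 0 ≤ ‖Q‖ ^ 2 / α * ‖e‖ ^ 2 := by positivity
  linear_combination hu + hQue + hQeu + hQe + hyoung + α / 4 * hsum + 2 * this +
    3 * mul_nonneg hq (sq_nonneg ‖e‖) + α / 2 * sq_nonneg ‖e‖

theorem le_inner_map_self_add_inner {B : X →L[ℝ] Y} {Q : X →L[ℝ] X} {S : Submodule ℝ Y}
    {α c ρ : ℝ} (hα : 0 < α) (hρ : 0 < ρ)
    (hQ : ∀ x, B x ∈ S → α * ‖x‖ ^ 2 ≤ ⟪Q x, x⟫)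
    (hc : ∀ d p, B d - p ∈ S → ∃ u, B u ∈ S ∧ ‖d - u‖ ≤ c * ‖p‖)
    (hρc : (α + 2 * ‖Q‖) ^ 2 / α * c ^ 2 ≤ ρ⁻¹)
    {d : X} {n : Y} (hn : ‖n‖ ^ 2 ≤ ⟪n, B d⟫) (hnS : B d - n ∈ S) :
    α / 4 * ‖d‖ ^ 2 ≤ ⟪Q d, d⟫ + ρ⁻¹ * ⟪n, B d⟫ := by
  obtain ⟨u, hu, hdu⟩ := hc d n hnS
  have hQd := Q.le_inner_map_add_self hα (hQ u hu) (d - u)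
  rw [add_sub_cancel] at hQd
  have hdu2 : ‖d - u‖ ^ 2 ≤ c ^ 2 * ‖n‖ ^ 2 := by
    rw [← mul_pow]; exact pow_le_pow_left₀ (norm_nonneg _) hdu 2
  calc α / 4 * ‖d‖ ^ 2
      ≤ ⟪Q d, d⟫ + (α + 2 * ‖Q‖) ^ 2 / α * (c ^ 2 * ‖n‖ ^ 2) := by
        have : 0 ≤ (α + 2 * ‖Q‖) ^ 2 / α := by positivity
        nlinarith [mul_le_mul_of_nonneg_left hdu2 this]
    _ ≤ ⟪Q d, d⟫ + ρ⁻¹ * ‖n‖ ^ 2 := by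
        rw [← mul_assoc]; gcongr
    _ ≤ ⟪Q d, d⟫ + ρ⁻¹ * ⟪n, B d⟫ := by gcongr

theorem contractingWith_sub_smul_of_strongly_monotone {T : X → X} {c t : ℝ} {L : ℝ≥0}
    (hc : 0 < c) (ht : t = c / ((L : ℝ) ^ 2 + c ^ 2))
    (hmono : ∀ a b, c * ‖a - b‖ ^ 2 ≤ ⟪T a - T b, a - b⟫) (hT : LipschitzWith L T) :
    ContractingWith (Real.sqrt (1 - t * c)).toNNReal fun z => z - t • T z := by
  have htpos : 0 < t := ht ▸ by positivity
  have htc : t * ((L : ℝ) ^ 2 + c ^ 2) = c := ht ▸ div_mul_cancel₀ _ (by positivity)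
  have hsq : ∀ a b, ‖(a - t • T a) - (b - t • T b)‖ ^ 2 ≤ (1 - t * c) * ‖a - b‖ ^ 2 :=
    fun a b => by
      have hL : ‖T a - T b‖ ^ 2 ≤ (L : ℝ) ^ 2 * ‖a - b‖ ^ 2 := by
        rw [← mul_pow]; exact pow_le_pow_left₀ (norm_nonneg _) (hT.norm_sub_le a b) 2
      rw [show (a - t • T a) - (b - t • T b) = (a - b) - t • (T a - T b) by
          rw [smul_sub]; abel,
        norm_sub_sq_real, real_inner_smul_right, norm_smul, Real.norm_of_nonneg htpos.le,
        real_inner_comm, mul_pow]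
      linear_combination 2 * mul_le_mul_of_nonneg_left (hmono a b) htpos.le +
        mul_le_mul_of_nonneg_left hL (sq_nonneg t) + t * ‖a - b‖ ^ 2 * htc +
        sq_nonneg (t * c * ‖a - b‖)
  refine ⟨Real.toNNReal_lt_one.mpr ?_, LipschitzWith.of_dist_le' fun a b => ?_⟩
  · rw [Real.sqrt_lt' one_pos]; nlinarith
  · rw [dist_eq_norm, dist_eq_norm, ← Real.sqrt_sq (norm_nonneg (_ - _)),
      ← Real.sqrt_sq (norm_nonneg (a - b)), ← Real.sqrt_mul' _ (sq_nonneg _)]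
    exact Real.sqrt_le_sqrt (hsq a b)

theorem existsUnique_eq_zero_of_strongly_monotone [CompleteSpace X] {T : X → X} {c : ℝ}
    {L : ℝ≥0} (hc : 0 < c) (hmono : ∀ a b, c * ‖a - b‖ ^ 2 ≤ ⟪T a - T b, a - b⟫)
    (hT : LipschitzWith L T) :
    ∃! z, T z = 0 := by
  have hzero : ∀ a b, T a = 0 → T b = 0 → a = b := fun a b ha hb => by
    have h := hmono a b
    rw [ha, hb, sub_zero, inner_zero_left] at h
    have : ‖a - b‖ ^ 2 = 0 := le_antisymm (nonpos_of_mul_nonpos_right h hc) (sq_nonneg _)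
    exact sub_eq_zero.mp (norm_eq_zero.mp (pow_eq_zero_iff two_ne_zero |>.mp this))
  set t := c / ((L : ℝ) ^ 2 + c ^ 2) with ht
  have htpos : 0 < t := by positivity
  have hg := contractingWith_sub_smul_of_strongly_monotone hc ht hmono hT
  have : Nonempty X := ⟨0⟩
  have hfix : t • T (hg.fixedPoint _) = 0 := by
    have := hg.fixedPoint_isFixedPt
    rwa [Function.IsFixedPt, sub_eq_self] at this
  have hz := (smul_eq_zero.mp hfix).resolve_left htpos.ne'
  exact ⟨_, hz, fun z hz' => hzero _ _ hz' hz⟩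

theorem existsUnique_complementarity_system [CompleteSpace X] [CompleteSpace Y]
    {C : ProperCone ℝ Y} {S : Submodule ℝ Y} (hCS : ∀ y ∈ C, y ∈ S) {B : X →L[ℝ] Y}
    {Q : X →L[ℝ] X} {α c ρ : ℝ} (hα : 0 < α)
    (hρ : 0 < ρ) (hQ : ∀ x, B x ∈ S → α * ‖x‖ ^ 2 ≤ ⟪Q x, x⟫)
    (hc : ∀ d p, B d - p ∈ S → ∃ u, B u ∈ S ∧ ‖d - u‖ ≤ c * ‖p‖)
    (hρc : (α + 2 * ‖Q‖) ^ 2 / α * c ^ 2 ≤ ρ⁻¹) (φ : X) (r : Y) :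
    ∃! w : X × Y, (∀ y ∈ C, ⟪w.2, y⟫ ≤ 0) ∧ Q w.1 + B.adjoint w.2 + φ = 0 ∧
      B w.1 + r - ρ • w.2 ∈ C ∧ ⟪w.2, B w.1 + r - ρ • w.2⟫ = 0 := by
  set N : Y → Y := fun v => v - C.proj v
  set Λ : X → Y := fun z => ρ⁻¹ • N (B z + r)
  set T : X → X := fun z => Q z + B.adjoint (Λ z) + φ
  have hsys : ∀ w : X × Y, ((∀ y ∈ C, ⟪w.2, y⟫ ≤ 0) ∧ Q w.1 + B.adjoint w.2 + φ = 0 ∧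
      B w.1 + r - ρ • w.2 ∈ C ∧ ⟪w.2, B w.1 + r - ρ • w.2⟫ = 0) ↔ w.2 = Λ w.1 ∧ T w.1 = 0 := by
    intro w
    rw [and_left_comm, ProperCone.complementarity_iff hρ]
    exact and_comm.trans (and_congr_right fun hl => by rw [hl])
  have hmono : ∀ a b, α / 4 * ‖a - b‖ ^ 2 ≤ ⟪T a - T b, a - b⟫ := fun a b => by
    have hBd : B (a - b) = (B a + r) - (B b + r) := by rw [map_sub]; abel
    have hT : T a - T b = Q (a - b) + ρ⁻¹ • B.adjoint (N (B a + r) - N (B b + r)) := by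
      simp only [T, Λ, map_sub, map_smul, smul_sub]; abel
    rw [hT, inner_add_left, real_inner_smul_left, ContinuousLinearMap.adjoint_inner_left]
    refine le_inner_map_self_add_inner hα hρ hQ hc hρc ?_ ?_
    · rw [hBd]
      exact ProperCone.norm_sub_proj_sub_sq_le (C := C) _ _
    · rw [hBd, show (B a + r) - (B b + r) - (N (B a + r) - N (B b + r)) =
          C.proj (B a + r) - C.proj (B b + r) by simp only [N]; abel]
      exact sub_mem (hCS _ (ProperCone.proj_mem _)) (hCS _ (ProperCone.proj_mem _))
  have hlip : LipschitzWith _ T := (Q.lipschitz.add (B.adjoint.lipschitz.comp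
    ((lipschitzWith_smul ρ⁻¹).comp ((ProperCone.lipschitzWith_one_sub_proj (C := C)).comp
      (B.lipschitz.add (LipschitzWith.const r)))))).add (LipschitzWith.const φ)
  obtain ⟨z, hz, huniq⟩ := existsUnique_eq_zero_of_strongly_monotone (by positivity) hmono hlip
  refine ⟨(z, Λ z), (hsys _).mpr ⟨rfl, hz⟩, fun w hw => ?_⟩
  obtain ⟨hl, hTw⟩ := (hsys w).mp hw
  have hw₁ := huniq _ hTw
  exact Prod.ext hw₁ (hl.trans (congrArg Λ hw₁))

end Operators

theorem stmt6_general
    {X Y : Type*} [NormedAddCommGroup X] [InnerProductSpace ℝ X] [CompleteSpace X]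
    [NormedAddCommGroup Y] [InnerProductSpace ℝ Y] [CompleteSpace Y]
    {m : ℕ} (yv : Fin m → Y)
    (K : Set Y) (hKdef : K = {y : Y | ∃ μ : Fin m → ℝ, (∀ i, 0 ≤ μ i) ∧ y = ∑ i, μ i • yv i})
    (Kpol : Set Y) (hKpol : Kpol = {l : Y | ∀ y ∈ K, (inner ℝ l y : ℝ) ≤ 0})
    (B : X →L[ℝ] Y)
    (hBrange : IsClosed (LinearMap.range (B : X →ₗ[ℝ] Y) : Set Y))
    (Q : X →L[ℝ] X)
    (α : ℝ) (hα : 0 < α)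
    (hQcoer : ∀ x : X, B x ∈ Submodule.span ℝ (Set.range yv) →
      α * ‖x‖ ^ 2 ≤ (inner ℝ (Q x) x : ℝ)) :
    ∃ σ > (0 : ℝ), ∀ ρ : ℝ, 0 < ρ → ρ ≤ σ → ∀ (φ : X) (r : Y),
      ∃! w : X × Y,
        w.2 ∈ Kpol ∧
        Q w.1 + (ContinuousLinearMap.adjoint B) w.2 + φ = 0 ∧
        B w.1 + r - ρ • w.2 ∈ K ∧
        (inner ℝ w.2 (B w.1 + r - ρ • w.2) : ℝ) = 0 := by
  have : FiniteDimensional ℝ (Submodule.span ℝ (Set.range yv)) :=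
    FiniteDimensional.span_of_finite ℝ (Set.finite_range yv)
  obtain ⟨c, hc, hcS⟩ :=
    B.exists_norm_sub_le_of_sub_mem hBrange (Submodule.span ℝ (Set.range yv))
  set M := (α + 2 * ‖Q‖) ^ 2 / α * c ^ 2
  have hM : 0 < M := by positivity
  refine ⟨M⁻¹, inv_pos.mpr hM, fun ρ hρ hρσ φ r => ?_⟩
  let C : ProperCone ℝ Y := ⟨conicCombinations yv Finset.univ, isClosed_conicCombinations _⟩
  have hK : K = C := by
    rw [hKdef]; ext; simp [C, conicCombinations]
  subst hKpol
  rw [hK]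
  exact existsUnique_complementarity_system (fun _ => mem_span_of_mem_conicCombinations) hα hρ
    hQcoer hcS (by simpa using inv_anti₀ hρ hρσ) φ r

/-- unique solvability of the stabilized saddle-point system.
Let `X`, `Y` be real Hilbert spaces, `y₁, …, y_m ∈ Y`, `S = span{y₁,…,y_m}`,
`K = {Σ μᵢ yᵢ : μᵢ ≥ 0}`, `K°` its polar cone.  Let `B : X → Y` be Fredholm and
`Q : X → X` bounded self-adjoint with `⟪Qx, x⟫ ≥ α‖x‖²` for some `α > 0` and all
`x` with `Bx ∈ S` (in particular all `x ∈ ker B`).  Then there is `σ > 0` such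
that for all `0 < ρ ≤ σ` and all `(φ, r)` the system
`λ ∈ K°`, `Qz + B†λ + φ = 0`, `Bz + r − ρλ ∈ K`, `⟪λ, Bz + r − ρλ⟫ = 0`
has exactly one solution `(z, λ)`. -/
theorem stmt6
    {X Y : Type*} [NormedAddCommGroup X] [InnerProductSpace ℝ X] [CompleteSpace X]
    [NormedAddCommGroup Y] [InnerProductSpace ℝ Y] [CompleteSpace Y]
    {m : ℕ} (yv : Fin m → Y)
    (K : Set Y) (hKdef : K = {y : Y | ∃ μ : Fin m → ℝ, (∀ i, 0 ≤ μ i) ∧ y = ∑ i, μ i • yv i})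
    (Kpol : Set Y) (hKpol : Kpol = {l : Y | ∀ y ∈ K, (inner ℝ l y : ℝ) ≤ 0})
    (B : X →L[ℝ] Y)
    (hBker : FiniteDimensional ℝ (LinearMap.ker (B : X →ₗ[ℝ] Y)))
    (hBrange : IsClosed (LinearMap.range (B : X →ₗ[ℝ] Y) : Set Y))
    (hBcodim : FiniteDimensional ℝ (Y ⧸ LinearMap.range (B : X →ₗ[ℝ] Y)))
    (Q : X →L[ℝ] X)
    (hQsym : ∀ x₁ x₂ : X, (inner ℝ (Q x₁) x₂ : ℝ) = inner ℝ (Q x₂) x₁)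
    (α : ℝ) (hα : 0 < α)
    (hQcoer : ∀ x : X, B x ∈ Submodule.span ℝ (Set.range yv) →
      α * ‖x‖ ^ 2 ≤ (inner ℝ (Q x) x : ℝ)) :
    ∃ σ > (0 : ℝ), ∀ ρ : ℝ, 0 < ρ → ρ ≤ σ → ∀ (φ : X) (r : Y),
      ∃! w : X × Y,
        w.2 ∈ Kpol ∧
        Q w.1 + (ContinuousLinearMap.adjoint B) w.2 + φ = 0 ∧
        B w.1 + r - ρ • w.2 ∈ K ∧
        (inner ℝ w.2 (B w.1 + r - ρ • w.2) : ℝ) = 0 :=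
  stmt6_general yv K hKdef Kpol hKpol B hBrange Q α hα hQcoer
end
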